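/- arXiv:2004.03219 — 3 statements merged into one kernel-verified Lean document; each statement's English description precedes it below -/
import Mathlib

section
/- Main theorem of the penalty method (limit point satisfies the constraint): Suppose X is a topological space, F : X → ℝ and P : X → ℝ are continuous, F(Φ) ≥ 0 and P(Φ) ≥ 0 for all Φ ∈ X, (λ_k)_{k∈ℕ} is a strictly increasing sequence of positive reals with λ_k → ∞, for each k the element Ψ_k is a minimizer of F_P(·, λ_k), the sequence (Ψ_k) converges in X to an element Ψ̄, and there exists a constrained minimizer Ψ* of F. Then P(Ψ̄) = 0. -/
open Filter Topology

/-! Comparing each penalized minimizer `Ψ k` with a feasible point `Ψs` gives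
`lam k * P (Ψ k) ≤ F Ψs`, so the penalty decays like `1 / lam k`; continuity of `P` passes
`P (Ψ k) → 0` to the limit `Ψbar`. -/

lemma penalty_le_div_of_le_feasible {X : Type*} {F P : X → ℝ} {lam : ℝ} {Ψ Ψs : X}
    (hF : 0 ≤ F Ψ) (hlam : 0 < lam) (hΨ : F Ψ + lam * P Ψ ≤ F Ψs + lam * P Ψs)
    (hPs : P Ψs = 0) :
    P Ψ ≤ F Ψs / lam := by
  rw [hPs, mul_zero, add_zero] at hΨ
  rw [le_div_iff₀ hlam, mul_comm]
  linarith

lemma tendsto_penalty_zero_of_le_feasible {X : Type*} {F P : X → ℝ} {lam : ℕ → ℝ}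
    {Ψ : ℕ → X} {Ψs : X} (hF : ∀ k, 0 ≤ F (Ψ k)) (hP : ∀ k, 0 ≤ P (Ψ k))
    (hlampos : ∀ k, 0 < lam k) (hlamtop : Tendsto lam atTop atTop)
    (hΨ : ∀ k, F (Ψ k) + lam k * P (Ψ k) ≤ F Ψs + lam k * P Ψs) (hPs : P Ψs = 0) :
    Tendsto (fun k => P (Ψ k)) atTop (𝓝 0) :=
  squeeze_zero hP (fun k => penalty_le_div_of_le_feasible (hF k) (hlampos k) (hΨ k) hPs)
    (tendsto_const_nhds.div_atTop hlamtop)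

theorem limit_satisfies_constraint_general {X : Type*} [TopologicalSpace X] (F P : X → ℝ)
    (hPc : Continuous P)
    (hF : ∀ Φ : X, 0 ≤ F Φ) (hP : ∀ Φ : X, 0 ≤ P Φ)
    (lam : ℕ → ℝ) (hlampos : ∀ k, 0 < lam k)
    (hlamtop : Tendsto lam atTop atTop)
    (Ψ : ℕ → X)
    (hΨ : ∀ k, ∀ Φ : X, F (Ψ k) + lam k * P (Ψ k) ≤ F Φ + lam k * P Φ)
    (Ψbar : X) (hconv : Tendsto Ψ atTop (𝓝 Ψbar))
    (hexists : ∃ Ψs : X, P Ψs = 0 ∧ ∀ Φ : X, P Φ = 0 → F Ψs ≤ F Φ) :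
    P Ψbar = 0 := by
  obtain ⟨Ψs, hPs, -⟩ := hexists
  have hto_zero : Tendsto (fun k => P (Ψ k)) atTop (𝓝 0) :=
    tendsto_penalty_zero_of_le_feasible (fun k => hF _) (fun k => hP _) hlampos hlamtop
      (fun k => hΨ k Ψs) hPs
  exact tendsto_nhds_unique ((hPc.tendsto Ψbar).comp hconv) hto_zero

/-- Main theorem of the penalty method (limit point satisfies the constraint):
with `F, P : X → ℝ` continuous and nonnegative on a topological space `X`,
`(λ_k)` strictly increasing, positive, tending to infinity, each `Ψ_k` a
minimizer of `F + λ_k • P`, `Ψ_k → Ψ̄`, and a constrained minimizer of `F`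
existing, the limit satisfies `P Ψ̄ = 0`. -/
theorem limit_satisfies_constraint {X : Type*} [TopologicalSpace X] (F P : X → ℝ)
    (hFc : Continuous F) (hPc : Continuous P)
    (hF : ∀ Φ : X, 0 ≤ F Φ) (hP : ∀ Φ : X, 0 ≤ P Φ)
    (lam : ℕ → ℝ) (hlampos : ∀ k, 0 < lam k) (hlammono : StrictMono lam)
    (hlamtop : Tendsto lam atTop atTop)
    (Ψ : ℕ → X)
    (hΨ : ∀ k, ∀ Φ : X, F (Ψ k) + lam k * P (Ψ k) ≤ F Φ + lam k * P Φ)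
    (Ψbar : X) (hconv : Tendsto Ψ atTop (𝓝 Ψbar))
    (hexists : ∃ Ψs : X, P Ψs = 0 ∧ ∀ Φ : X, P Φ = 0 → F Ψs ≤ F Φ) :
    P Ψbar = 0 :=
  limit_satisfies_constraint_general F P hPc hF hP lam hlampos hlamtop Ψ hΨ Ψbar hconv hexists
end

section
/- Main theorem of the penalty method (limit point is a constrained minimizer): Suppose X is a topological space, F : X → ℝ and P : X → ℝ are continuous, F(Φ) ≥ 0 and P(Φ) ≥ 0 for all Φ ∈ X, (λ_k)_{k∈ℕ} is a strictly increasing sequence of positive reals with λ_k → ∞, for each k the element Ψ_k is a minimizer of F_P(·, λ_k), the sequence (Ψ_k) converges in X to an element Ψ̄, and there exists a constrained minimizer Ψ* of F. Then F(Ψ̄) = F(Ψ*); in particular Ψ̄ is itself a constrained minimizer of F. -/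
/-!
For every feasible `Φ`, comparing the penalized minimizer `Ψ_k` with `Φ` gives
`F Ψ_k + λ_k P Ψ_k ≤ F Φ`. Hence `F Ψ_k ≤ F Φ` and, as `F ≥ 0`, `P Ψ_k ≤ F Φ / λ_k → 0`.
By continuity the limit `Ψ̄` is feasible and `F Ψ̄ ≤ F Ψ*`, while `F Ψ* ≤ F Ψ̄` by
minimality of `Ψ*` among feasible points.
-/

open Filter Topology

section Penalty

variable {X : Type*} {F P : X → ℝ} {lam : ℝ} {Ψ Φ : X}

theorem objective_le_of_penalized_min (hPΨ : 0 ≤ P Ψ) (hlam : 0 ≤ lam)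
    (hmin : ∀ Φ, F Ψ + lam * P Ψ ≤ F Φ + lam * P Φ) (hΦ : P Φ = 0) : F Ψ ≤ F Φ := by
  have := hmin Φ
  rw [hΦ, mul_zero, add_zero] at this
  nlinarith

theorem penalty_le_div_of_penalized_min (hF : ∀ Φ, 0 ≤ F Φ) (hlam : 0 < lam)
    (hmin : ∀ Φ, F Ψ + lam * P Ψ ≤ F Φ + lam * P Φ) (hΦ : P Φ = 0) : P Ψ ≤ F Φ / lam := by
  have := hmin Φ
  rw [hΦ, mul_zero, add_zero] at this
  rw [le_div_iff₀ hlam]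
  linarith [hF Ψ]

theorem tendsto_penalty_zero_of_penalized_min (hF : ∀ Φ, 0 ≤ F Φ) (hP : ∀ Φ, 0 ≤ P Φ)
    {lam : ℕ → ℝ} (hlampos : ∀ k, 0 < lam k) (hlamtop : Tendsto lam atTop atTop) {Ψ : ℕ → X}
    (hmin : ∀ k Φ, F (Ψ k) + lam k * P (Ψ k) ≤ F Φ + lam k * P Φ) (hΦ : P Φ = 0) :
    Tendsto (fun k => P (Ψ k)) atTop (𝓝 0) :=
  tendsto_of_tendsto_of_tendsto_of_le_of_le tendsto_const_nhds
    (tendsto_const_nhds.div_atTop hlamtop) (fun k => hP (Ψ k))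
    (fun k => penalty_le_div_of_penalized_min hF (hlampos k) (hmin k) hΦ)

end Penalty

theorem IsMinOn.of_mem_of_le {X : Type*} {F : X → ℝ} {s : Set X} {x y : X}
    (hy : IsMinOn F s y) (hx : x ∈ s) (hle : F x ≤ F y) : IsMinOn F s x ∧ F x = F y := by
  have heq : F x = F y := le_antisymm hle (isMinOn_iff.1 hy x hx)
  exact ⟨isMinOn_iff.2 fun z hz => heq ▸ isMinOn_iff.1 hy z hz, heq⟩

theorem limit_is_constrained_minimizer_general {X : Type*} [TopologicalSpace X] (F P : X → ℝ)
    (hFc : Continuous F) (hPc : Continuous P)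
    (hF : ∀ Φ : X, 0 ≤ F Φ) (hP : ∀ Φ : X, 0 ≤ P Φ)
    (lam : ℕ → ℝ) (hlampos : ∀ k, 0 < lam k)
    (hlamtop : Tendsto lam atTop atTop)
    (Ψ : ℕ → X)
    (hΨ : ∀ k, ∀ Φ : X, F (Ψ k) + lam k * P (Ψ k) ≤ F Φ + lam k * P Φ)
    (Ψbar : X) (hconv : Tendsto Ψ atTop (𝓝 Ψbar))
    (Ψs : X) (hPΨs : P Ψs = 0) (hΨs : ∀ Φ : X, P Φ = 0 → F Ψs ≤ F Φ) :
    F Ψbar = F Ψs ∧ (P Ψbar = 0 ∧ ∀ Φ : X, P Φ = 0 → F Ψbar ≤ F Φ) := by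
  have hPbar : P Ψbar = 0 := tendsto_nhds_unique ((hPc.tendsto Ψbar).comp hconv)
    (tendsto_penalty_zero_of_penalized_min hF hP hlampos hlamtop hΨ hPΨs)
  have hle : F Ψbar ≤ F Ψs := le_of_tendsto' ((hFc.tendsto Ψbar).comp hconv) fun k =>
    objective_le_of_penalized_min (hP _) (hlampos k).le (hΨ k) hPΨs
  have hΨsmin : IsMinOn F {Φ | P Φ = 0} Ψs := isMinOn_iff.2 hΨs
  obtain ⟨hmin, heq⟩ := hΨsmin.of_mem_of_le hPbar hle
  exact ⟨heq, hPbar, isMinOn_iff.1 hmin⟩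

/-- Main theorem of the penalty method (limit point is a constrained minimizer):
with `F, P : X → ℝ` continuous and nonnegative on a topological space `X`,
`(λ_k)` strictly increasing, positive, tending to infinity, each `Ψ_k` a
minimizer of `F + λ_k • P`, `Ψ_k → Ψ̄`, and `Ψ*` a constrained minimizer of `F`,
the limit satisfies `F Ψ̄ = F Ψ*`; in particular `Ψ̄` is itself a constrained
minimizer of `F`. -/
theorem limit_is_constrained_minimizer {X : Type*} [TopologicalSpace X] (F P : X → ℝ)
    (hFc : Continuous F) (hPc : Continuous P)
    (hF : ∀ Φ : X, 0 ≤ F Φ) (hP : ∀ Φ : X, 0 ≤ P Φ)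
    (lam : ℕ → ℝ) (hlampos : ∀ k, 0 < lam k) (hlammono : StrictMono lam)
    (hlamtop : Tendsto lam atTop atTop)
    (Ψ : ℕ → X)
    (hΨ : ∀ k, ∀ Φ : X, F (Ψ k) + lam k * P (Ψ k) ≤ F Φ + lam k * P Φ)
    (Ψbar : X) (hconv : Tendsto Ψ atTop (𝓝 Ψbar))
    (Ψs : X) (hPΨs : P Ψs = 0) (hΨs : ∀ Φ : X, P Φ = 0 → F Ψs ≤ F Φ) :
    F Ψbar = F Ψs ∧ (P Ψbar = 0 ∧ ∀ Φ : X, P Φ = 0 → F Ψbar ≤ F Φ) :=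
  limit_is_constrained_minimizer_general F P hFc hPc hF hP lam hlampos hlamtop Ψ hΨ Ψbar hconv Ψs
    hPΨs hΨs
end

section
/- Convergence of objective values to the constrained optimum: Suppose X is a topological space, F : X → ℝ and P : X → ℝ are continuous, F(Φ) ≥ 0 and P(Φ) ≥ 0 for all Φ ∈ X, (λ_k)_{k∈ℕ} is a strictly increasing sequence of positive reals with λ_k → ∞, for each k the element Ψ_k is a minimizer of F_P(·, λ_k), the sequence (Ψ_k) converges in X, and there exists a constrained minimizer Ψ* of F. Then F(Ψ_k) → F(Ψ*) as k → ∞. -/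
/-!
Testing a minimizer `Ψ_k` of `F + λ_k P` against `Ψ*` gives `F (Ψ_k) + λ_k P (Ψ_k) ≤ F Ψ*`.
Since `λ_k → ∞`, this bound forces the limit `Ψ̄` of the `Ψ_k` to satisfy `P Ψ̄ = 0`, so
`F Ψ* ≤ F Ψ̄`; dropping the nonnegative penalty term gives `F Ψ̄ ≤ F Ψ*`.
-/

open Filter Topology

theorem nonpos_of_tendsto_of_add_mul_le {ι : Type*} {l : Filter ι} [l.NeBot]
    {a b lam : ι → ℝ} {α β C : ℝ} (ha : Tendsto a l (𝓝 α)) (hb : Tendsto b l (𝓝 β))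
    (hlam : Tendsto lam l atTop) (hle : ∀ᶠ i in l, a i + lam i * b i ≤ C) : β ≤ 0 := by
  by_contra! hβ
  have hsum : Tendsto (fun i => a i + lam i * b i) l atTop :=
    ha.add_atTop (hlam.atTop_mul_pos hβ hb)
  obtain ⟨i, hi, hgt⟩ := (hle.and (hsum.eventually_gt_atTop C)).exists
  exact hgt.not_ge hi

theorem objective_tendsto_constrained_optimum_general {X : Type*} [TopologicalSpace X]
    (F P : X → ℝ)
    (hFc : Continuous F) (hPc : Continuous P)
    (hP : ∀ Φ : X, 0 ≤ P Φ)
    (lam : ℕ → ℝ)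
    (hlamtop : Tendsto lam atTop atTop)
    (Ψ : ℕ → X)
    (hΨ : ∀ k, ∀ Φ : X, F (Ψ k) + lam k * P (Ψ k) ≤ F Φ + lam k * P Φ)
    (hconv : ∃ Ψbar : X, Tendsto Ψ atTop (𝓝 Ψbar))
    (Ψs : X) (hPΨs : P Ψs = 0) (hΨs : ∀ Φ : X, P Φ = 0 → F Ψs ≤ F Φ) :
    Tendsto (fun k => F (Ψ k)) atTop (𝓝 (F Ψs)) := by
  obtain ⟨Ψbar, hlim⟩ := hconv
  have hbound : ∀ k, F (Ψ k) + lam k * P (Ψ k) ≤ F Ψs := fun k => by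
    simpa only [hPΨs, mul_zero, add_zero] using hΨ k Ψs
  have hFlim : Tendsto (fun k => F (Ψ k)) atTop (𝓝 (F Ψbar)) := (hFc.tendsto Ψbar).comp hlim
  have hPlim : Tendsto (fun k => P (Ψ k)) atTop (𝓝 (P Ψbar)) := (hPc.tendsto Ψbar).comp hlim
  have hfeasible : P Ψbar = 0 :=
    (nonpos_of_tendsto_of_add_mul_le hFlim hPlim hlamtop (.of_forall hbound)).antisymm (hP Ψbar)
  have hupper : F Ψbar ≤ F Ψs :=
    le_of_tendsto hFlim <| (hlamtop.eventually_ge_atTop 0).mono fun k hk =>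
      (le_add_of_nonneg_right (mul_nonneg hk (hP _))).trans (hbound k)
  rwa [hupper.antisymm (hΨs Ψbar hfeasible)] at hFlim

/-- Convergence of objective values to the constrained optimum: with
`F, P : X → ℝ` continuous and nonnegative, `(λ_k)` strictly increasing,
positive, tending to infinity, each `Ψ_k` a minimizer of `F + λ_k • P`, the
sequence `(Ψ_k)` converging in `X`, and `Ψ*` a constrained minimizer of `F`,
one has `F (Ψ_k) → F Ψ*`. -/
theorem objective_tendsto_constrained_optimum {X : Type*} [TopologicalSpace X]
    (F P : X → ℝ)
    (hFc : Continuous F) (hPc : Continuous P)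
    (hF : ∀ Φ : X, 0 ≤ F Φ) (hP : ∀ Φ : X, 0 ≤ P Φ)
    (lam : ℕ → ℝ) (hlampos : ∀ k, 0 < lam k) (hlammono : StrictMono lam)
    (hlamtop : Tendsto lam atTop atTop)
    (Ψ : ℕ → X)
    (hΨ : ∀ k, ∀ Φ : X, F (Ψ k) + lam k * P (Ψ k) ≤ F Φ + lam k * P Φ)
    (hconv : ∃ Ψbar : X, Tendsto Ψ atTop (𝓝 Ψbar))
    (Ψs : X) (hPΨs : P Ψs = 0) (hΨs : ∀ Φ : X, P Φ = 0 → F Ψs ≤ F Φ) :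
    Tendsto (fun k => F (Ψ k)) atTop (𝓝 (F Ψs)) :=
  objective_tendsto_constrained_optimum_general F P hFc hPc hP lam hlamtop Ψ hΨ hconv Ψs hPΨs hΨs
end
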